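/- Let n ≥ 1. There is no holomorphic function f on a nonempty open connected subset U ⊆ ℂⁿ such that the real part of f, viewed as a map U → ℝ, is both proper and bounded below. -/

import Mathlib

/-!
If `Re f` were proper and bounded below on `U`, it would attain a minimum. Then `‖exp (-f)‖`
attains its maximum on the connected open set `U`, so by the maximum modulus principle `Re f`
is constant. A constant proper map has compact domain, so `U` would be a nonempty compact open
subset of the connected, noncompact space `ℂⁿ`, which is impossible.
-/

open Set

theorem IsProperMap.exists_forall_le_of_bddBelow {X α : Type*} [TopologicalSpace X]
    [Nonempty X] [LinearOrder α] [TopologicalSpace α] [ClosedIicTopology α] [CompactIccSpace α]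
    {φ : X → α} (hφ : IsProperMap φ) (hb : BddBelow (range φ)) : ∃ c, ∀ z, φ c ≤ φ z := by
  obtain ⟨m, hm⟩ := hb
  obtain ⟨x₀⟩ := ‹Nonempty X›
  refine hφ.continuous.exists_forall_le' x₀ ?_
  have hK : IsCompact (φ ⁻¹' Icc m (φ x₀)) := hφ.isCompact_preimage isCompact_Icc
  filter_upwards [hK.compl_mem_cocompact] with x hx
  by_contra hlt
  exact hx ⟨hm ⟨x, rfl⟩, (not_le.1 hlt).le⟩

theorem Complex.eqOn_re_of_isPreconnected_of_isMinOn_re {E : Type*} [NormedAddCommGroup E]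
    [NormedSpace ℂ E] {f : E → ℂ} {U : Set E} {c : E} (hc : IsPreconnected U) (ho : IsOpen U)
    (hd : DifferentiableOn ℂ f U) (hcU : c ∈ U) (hm : IsMinOn (fun z ↦ (f z).re) U c) :
    EqOn (fun z ↦ (f z).re) (Function.const E (f c).re) U := by
  have hnorm (z : E) : ‖exp (-f z)‖ = Real.exp (-(f z).re) := by
    rw [Complex.norm_exp, Complex.neg_re]
  have hmax : IsMaxOn (fun z ↦ ‖exp (-f z)‖) U c := fun z hz ↦ by
    simpa only [hnorm, Real.exp_le_exp, neg_le_neg_iff] using hm hz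
  intro z hz
  have := norm_eqOn_of_isPreconnected_of_isMaxOn hc ho hd.neg.cexp hcU hmax hz
  simpa only [Function.comp_apply, Pi.neg_apply, Function.const_apply, hnorm, Real.exp_eq_exp,
    neg_inj] using this

theorem IsCompact.eq_empty_of_isOpen {X : Type*} [TopologicalSpace X] [T2Space X]
    [PreconnectedSpace X] [NoncompactSpace X] {U : Set X} (hc : IsCompact U) (ho : IsOpen U) :
    U = ∅ :=
  not_nonempty_iff_eq_empty.1 fun hne ↦ hc.ne_univ (IsClopen.eq_univ ⟨hc.isClosed, ho⟩ hne)

theorem no_holomorphic_with_proper_bddBelow_re_general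
    (n : ℕ) (hn : 1 ≤ n) (U : Set (Fin n → ℂ))
    (hUopen : IsOpen U) (hUconn : IsConnected U) :
    ¬ ∃ f : (Fin n → ℂ) → ℂ, DifferentiableOn ℂ f U ∧
        IsProperMap (fun z : U => (f z).re) ∧
        BddBelow (Set.range fun z : U => (f z).re) := by
  rintro ⟨f, hf, hproper, hbdd⟩
  have : Nonempty U := hUconn.nonempty.to_subtype
  obtain ⟨c, hc⟩ := hproper.exists_forall_le_of_bddBelow hbdd
  have hconst : (fun z : U ↦ (f z).re) = fun _ ↦ (f c).re :=
    funext fun z ↦ Complex.eqOn_re_of_isPreconnected_of_isMinOn_re hUconn.isPreconnected hUopen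
      hf c.2 (fun w hw ↦ hc ⟨w, hw⟩) z.2
  have hUcpt : CompactSpace U := (isProperMap_const_iff _).1 (hconst ▸ hproper)
  have : Nonempty (Fin n) := ⟨⟨0, hn⟩⟩
  exact hUconn.nonempty.ne_empty
    ((isCompact_iff_compactSpace.2 hUcpt).eq_empty_of_isOpen hUopen)

/-- There is no holomorphic function on a nonempty open connected subset
`U ⊆ ℂⁿ` whose real part (as a map `U → ℝ`) is both proper and bounded below. -/
theorem no_holomorphic_with_proper_bddBelow_re
    (n : ℕ) (hn : 1 ≤ n) (U : Set (Fin n → ℂ))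
    (hUopen : IsOpen U) (hUne : U.Nonempty) (hUconn : IsConnected U) :
    ¬ ∃ f : (Fin n → ℂ) → ℂ, DifferentiableOn ℂ f U ∧
        IsProperMap (fun z : U => (f z).re) ∧
        BddBelow (Set.range fun z : U => (f z).re) :=
  no_holomorphic_with_proper_bddBelow_re_general n hn U hUopen hUconn
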